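/- Suppose p and q are odd, and ε+η ≡ n (mod 2). Then the number of reduced solutions for the data (n,k,u,v,p,q,ε,η) equals the binomial coefficient C(k−1, (p−1)/2) = C(k−1, (q−1)/2). -/

import Mathlib

/-!
A reduced solution is determined by the set `Y` of the `y_m`: `y` and `x` are the decreasing
enumerations of `Y` and of its complement `X` in `[u+v+1, n]`, and the `a_m`, `b_i` exist exactly
when `y_m + m` and `x_i + i` have the prescribed parities (nonnegativity is then automatic).

Let `N w` be the number of elements of `Y` above `w`. The two parity conditions say that `N w` has a
parity determined by the colour of `w` (in `Y` or in `X`), and `N (w - 1) = N w + [w ∈ Y]`.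
Comparing neighbours shows, when `ε + η ≡ n`, that the colour can change only between
`u+v+2i-1` and `u+v+2i`. So `Y` is a union of blocks `{u+v+2i, u+v+2i+1}` (`1 ≤ i ≤ k-1`) and of
exactly one endpoint, `n` if `ε ≡ u` and `u+v+1` otherwise. As `#Y = p`, it contains `(p-1)/2` of
the `k-1` blocks.
-/

/-- A *reduced solution* for the data `(n,k,u,v,p,q,ε,η)` (with `n = 2k+u+v`,
`p + q = 2k`): strictly decreasing positive integers `x_1 > … > x_q` and
`y_1 > … > y_p` whose underlying sets are disjoint with union `{u+v+1, …, n}`,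
together with weakly decreasing nonnegative integers `b_1 ≥ … ≥ b_q ≥ 0`,
`a_1 ≥ … ≥ a_p ≥ 0` such that `x_i = (u+q+1−i) + η + 2b_i` and
`y_m = (v+p−m) + ε + 2a_m` (written here with 0-based indices). -/
structure RedSol (n u v p q ε η : ℕ) where
  x : Fin q → ℤ
  y : Fin p → ℤ
  b : Fin q → ℤ
  a : Fin p → ℤ
  x_anti : StrictAnti x
  y_anti : StrictAnti y
  x_pos : ∀ i, 0 < x i
  y_pos : ∀ m, 0 < y m
  disj : Disjoint (Finset.univ.image x) (Finset.univ.image y)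
  uni : Finset.univ.image x ∪ Finset.univ.image y =
    Finset.Icc ((u : ℤ) + v + 1) (n : ℤ)
  b_anti : Antitone b
  a_anti : Antitone a
  b_nonneg : ∀ i, 0 ≤ b i
  a_nonneg : ∀ m, 0 ≤ a m
  hx : ∀ i : Fin q, x i = (u : ℤ) + q - i.1 + η + 2 * b i
  hy : ∀ m : Fin p, y m = (v : ℤ) + p - 1 - m.1 + ε + 2 * a m

open Finset

/-- `w + #{z ∈ S | w < z}` is `s j + j` when `w = s j` in the decreasing enumeration `s` of `S`. -/
def RankParity (S : Finset ℤ) (A : ℤ) : Prop :=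
  ∀ w ∈ S, w + #{z ∈ S | w < z} ≡ A [ZMOD 2]

instance (S : Finset ℤ) (A : ℤ) : Decidable (RankParity S A) := by
  unfold RankParity; infer_instance

namespace StrictAnti

variable {L : ℕ} {e : Fin L → ℤ}

lemma card_filter_apply_lt (he : StrictAnti e) (j : Fin L) :
    #{z ∈ univ.image e | e j < z} = j := by
  rw [filter_image, card_image_of_injective _ he.injective]
  simp [he.lt_iff_gt, filter_gt_eq_Iio]

lemma apply_add_le_apply_add (he : StrictAnti e) {i j : Fin L} (hij : i ≤ j) :
    e j + j ≤ e i + i := by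
  cases L with
  | zero => exact i.elim0
  | succ L =>
    refine Fin.antitone_iff_succ_le (f := fun j : Fin (L + 1) => e j + (j : ℤ)) |>.2
      (fun i => ?_) hij
    have := he (Fin.castSucc_lt_succ (i := i))
    simp only [Fin.val_succ, Fin.val_castSucc]
    push_cast
    omega

lemma rankParity_image (he : StrictAnti e) {A : ℤ} {c : Fin L → ℤ}
    (h : ∀ i, e i = A - i + 2 * c i) : RankParity (univ.image e) A := by
  intro w hw
  obtain ⟨i, -, rfl⟩ := mem_image.1 hw
  rw [he.card_filter_apply_lt, h i, Int.ModEq]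
  omega

end StrictAnti

lemma RankParity.exists_strictAnti {S : Finset ℤ} {A : ℤ} {L : ℕ} (hS : RankParity S A)
    (hL : #S = L) (hlow : ∀ w ∈ S, A - L ≤ w) :
    ∃ e : Fin L → ℤ, StrictAnti e ∧ univ.image e = S ∧
      ∃ c : Fin L → ℤ, Antitone c ∧ (∀ i, 0 ≤ c i) ∧ ∀ i, e i = A - i + 2 * c i := by
  set e : Fin L → ℤ := fun i => S.orderEmbOfFin hL i.rev
  have he : StrictAnti e := fun i j hij => (S.orderEmbOfFin hL).strictMono (by simpa using hij)
  have himg : univ.image e = S := by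
    rw [← image_orderEmbOfFin_univ S hL]
    ext w
    simp only [mem_image, mem_univ, true_and]
    exact ⟨fun ⟨i, h⟩ => ⟨i.rev, h⟩, fun ⟨i, h⟩ => ⟨i.rev, by simp [e, h]⟩⟩
  have hmem : ∀ i, e i ∈ S := fun i => himg ▸ mem_image_of_mem e (mem_univ i)
  have hpar : ∀ i, e i + i ≡ A [ZMOD 2] := fun i => by
    simpa [← himg, he.card_filter_apply_lt] using hS (e i) (hmem i)
  refine ⟨e, he, himg, fun i => (e i + i - A) / 2, fun i j hij => ?_, fun i => ?_, fun i => ?_⟩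
  · have := he.apply_add_le_apply_add hij
    exact Int.ediv_le_ediv (by norm_num) (by omega)
  · -- parity upgrades `A - 1 ≤ e i + i` to `A ≤ e i + i`
    show 0 ≤ (e i + i - A) / 2
    have hi := i.isLt
    have hlast := he.apply_add_le_apply_add (i := i) (j := ⟨L - 1, by omega⟩)
      (Fin.mk_le_mk.2 (by omega))
    have hmin := hlow _ (hmem ⟨L - 1, by omega⟩)
    have := (hpar i).eq
    push_cast [Nat.cast_sub (show 1 ≤ L by omega)] at hlast
    omega
  · have := (hpar i).eq
    show e i = A - i + 2 * ((e i + i - A) / 2)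
    omega

namespace RedSol

variable {n u v p q ε η : ℕ}

lemma ext {s t : RedSol n u v p q ε η} (h₁ : s.x = t.x) (h₂ : s.y = t.y) : s = t := by
  have hb : s.b = t.b := funext fun i => by linarith [s.hx i, t.hx i, congrFun h₁ i]
  have ha : s.a = t.a := funext fun m => by linarith [s.hy m, t.hy m, congrFun h₂ m]
  cases s; cases t
  cases h₁; cases h₂; cases hb; cases ha
  rfl

lemma image_x_eq_sdiff (s : RedSol n u v p q ε η) :
    univ.image s.x = Icc ((u : ℤ) + v + 1) n \ univ.image s.y := by
  rw [← s.uni, union_sdiff_cancel_right s.disj]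

lemma image_y_subset (s : RedSol n u v p q ε η) :
    univ.image s.y ⊆ Icc ((u : ℤ) + v + 1) n :=
  subset_union_right.trans s.uni.subset

lemma card_image_y (s : RedSol n u v p q ε η) : #(univ.image s.y) = p := by
  simp [card_image_of_injective _ s.y_anti.injective]

lemma rankParity_image_y (s : RedSol n u v p q ε η) :
    RankParity (univ.image s.y) (v + p - 1 + ε) :=
  s.y_anti.rankParity_image (c := s.a) fun m => by rw [s.hy m]; ring

lemma rankParity_sdiff_image_y (s : RedSol n u v p q ε η) :
    RankParity (Icc ((u : ℤ) + v + 1) n \ univ.image s.y) (u + q + η) := by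
  rw [← s.image_x_eq_sdiff]
  exact s.x_anti.rankParity_image (c := s.b) fun i => by rw [s.hx i]; ring

lemma eq_of_image_y_eq {s t : RedSol n u v p q ε η} (hy : univ.image s.y = univ.image t.y) :
    s = t := by
  have hx : univ.image s.x = univ.image t.x := by
    rw [s.image_x_eq_sdiff, t.image_x_eq_sdiff, hy]
  refine ext ?_ ?_
  · exact (s.x_anti.range_inj t.x_anti).1
      (by simpa using congrArg (fun T : Finset ℤ => (T : Set ℤ)) hx)
  · exact (s.y_anti.range_inj t.y_anti).1
      (by simpa using congrArg (fun T : Finset ℤ => (T : Set ℤ)) hy)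

end RedSol

lemma exists_redSol_image_y_eq {n u v p q ε η : ℕ} (hn : n = u + v + p + q) (hε : ε ≤ 1)
    (hη : η ≤ 1) {Y : Finset ℤ} (hYI : Y ⊆ Icc ((u : ℤ) + v + 1) n) (hYp : #Y = p)
    (hY : RankParity Y (v + p - 1 + ε))
    (hX : RankParity (Icc ((u : ℤ) + v + 1) n \ Y) (u + q + η)) :
    ∃ s : RedSol n u v p q ε η, univ.image s.y = Y := by
  have hXq : #(Icc ((u : ℤ) + v + 1) n \ Y) = q := by
    rw [card_sdiff_of_subset hYI, Int.card_Icc, hYp]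
    omega
  obtain ⟨y, hy_anti, hy_img, a, ha_anti, ha_nonneg, hya⟩ :=
    hY.exists_strictAnti hYp fun w hw => by have := mem_Icc.1 (hYI hw); omega
  obtain ⟨x, hx_anti, hx_img, b, hb_anti, hb_nonneg, hxb⟩ :=
    hX.exists_strictAnti hXq fun w hw => by have := mem_Icc.1 (sdiff_subset hw); omega
  refine ⟨⟨x, y, b, a, hx_anti, hy_anti, fun i => ?_, fun m => ?_, ?_, ?_, hb_anti, ha_anti,
    hb_nonneg, ha_nonneg, fun i => by rw [hxb i]; ring, fun m => by rw [hya m]; ring⟩, hy_img⟩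
  · have := mem_Icc.1 (sdiff_subset (hx_img ▸ mem_image_of_mem x (mem_univ i)))
    omega
  · have := mem_Icc.1 (hYI (hy_img ▸ mem_image_of_mem y (mem_univ m)))
    omega
  · rw [hx_img, hy_img]; exact sdiff_disjoint
  · rw [hx_img, hy_img]; exact sdiff_union_of_subset hYI

theorem card_redSol_eq_card_filter {n u v p q ε η : ℕ} (hn : n = u + v + p + q) (hε : ε ≤ 1)
    (hη : η ≤ 1) :
    Nat.card (RedSol n u v p q ε η) =
      #{Y ∈ (Icc ((u : ℤ) + v + 1) n).powerset | #Y = p ∧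
        RankParity Y (v + p - 1 + ε) ∧ RankParity (Icc ((u : ℤ) + v + 1) n \ Y) (u + q + η)} := by
  rw [← Nat.card_eq_finsetCard]
  refine Nat.card_eq_of_bijective (fun s => ⟨univ.image s.y, mem_filter.2
      ⟨mem_powerset.2 s.image_y_subset, s.card_image_y, s.rankParity_image_y,
        s.rankParity_sdiff_image_y⟩⟩)
    ⟨fun s t hst => RedSol.eq_of_image_y_eq (congrArg Subtype.val hst), fun ⟨Y, hY⟩ => ?_⟩
  obtain ⟨hYI, hYp, hYpar, hXpar⟩ := mem_filter.1 hY
  obtain ⟨s, hs⟩ := exists_redSol_image_y_eq hn hε hη (mem_powerset.1 hYI) hYp hYpar hXpar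
  exact ⟨s, Subtype.ext hs⟩

lemma forall_mem_Icc_iff_of_step {P Q : ℤ → Prop} {a b : ℤ} (hab : a ≤ b)
    (hstep : ∀ w ∈ Ioc a b, P w → (P (w - 1) ↔ Q w)) :
    (∀ w ∈ Icc a b, P w) ↔ P b ∧ ∀ w ∈ Ioc a b, Q w := by
  constructor
  · intro h
    refine ⟨h b (right_mem_Icc.2 hab), fun w hw => ?_⟩
    obtain ⟨haw, hwb⟩ := mem_Ioc.1 hw
    exact (hstep w hw (h w (mem_Icc.2 ⟨haw.le, hwb⟩))).1 (h _ (mem_Icc.2 ⟨by omega, by omega⟩))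
  · rintro ⟨hb, hQ⟩ w hw
    induction w, (mem_Icc.1 hw).2 using Int.leInductionDown with
    | base => exact hb
    | pred w hwb ih =>
      have hw' : w ∈ Ioc a b := mem_Ioc.2 ⟨by linarith [(mem_Icc.1 hw).1], hwb⟩
      exact (hstep w hw' (ih (Ioc_subset_Icc_self hw'))).2 (hQ w hw')

lemma card_filter_sub_one_lt (S : Finset ℤ) (w : ℤ) :
    #{z ∈ S | w - 1 < z} = #{z ∈ S | w < z} + if w ∈ S then 1 else 0 := by
  rw [filter_congr (q := fun z => w < z ∨ z = w) (fun z _ => by omega), filter_or,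
    card_union_of_disjoint (disjoint_filter.2 fun z _ h h' => by omega), filter_eq']
  split_ifs <;> simp

lemma card_filter_sdiff_lt {a b w : ℤ} {Y : Finset ℤ} (hY : Y ⊆ Icc a b) (hw : a ≤ w + 1)
    (hwb : w ≤ b) : (#{z ∈ Icc a b \ Y | w < z} : ℤ) = b - w - #{z ∈ Y | w < z} := by
  have hsd : {z ∈ Icc a b \ Y | w < z} = {z ∈ Icc a b | w < z} \ {z ∈ Y | w < z} := by
    ext z; simp only [mem_filter, mem_sdiff]; tauto
  have hIcc : {z ∈ Icc a b | w < z} = Icc (w + 1) b := by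
    ext z; simp only [mem_filter, mem_Icc]; omega
  rw [hsd, card_sdiff_of_subset (filter_subset_filter _ hY), hIcc, Nat.cast_sub, Int.card_Icc]
  · omega
  · exact hIcc ▸ card_le_card (filter_subset_filter _ hY)

/-- The rank-parity condition at `w`, for `Y` and for its complement alike, in terms of the number
of elements of `Y` above `w`. -/
def ParityAbove (Y : Finset ℤ) (A C w : ℤ) : Prop :=
  (#{z ∈ Y | w < z} : ℤ) ≡ if w ∈ Y then A - w else C [ZMOD 2]

section ParityAbove

variable {Y : Finset ℤ} {A C w : ℤ}

lemma rankParity_and_rankParity_sdiff_iff {a b B : ℤ} (hY : Y ⊆ Icc a b) :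
    RankParity Y A ∧ RankParity (Icc a b \ Y) B ↔ ∀ w ∈ Icc a b, ParityAbove Y A (b - B) w := by
  have hX : ∀ w ∈ Icc a b, (#{z ∈ Icc a b \ Y | w < z} : ℤ) = b - w - #{z ∈ Y | w < z} :=
    fun w hw => card_filter_sdiff_lt hY (by have := mem_Icc.1 hw; omega) (mem_Icc.1 hw).2
  refine ⟨fun ⟨hYA, hXB⟩ w hw => ?_, fun h => ⟨fun w hw => ?_, fun w hw => ?_⟩⟩
  · by_cases hwY : w ∈ Y
    · have := hYA w hwY
      simp only [ParityAbove, hwY, if_true, Int.ModEq] at this ⊢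
      omega
    · have := hXB w (mem_sdiff.2 ⟨hw, hwY⟩)
      simp only [ParityAbove, hwY, if_false, Int.ModEq, hX w hw] at this ⊢
      omega
  · have := h w (hY hw)
    simp only [ParityAbove, hw, if_true, Int.ModEq] at this ⊢
    omega
  · obtain ⟨hwI, hwY⟩ := mem_sdiff.1 hw
    have := h w hwI
    simp only [ParityAbove, hwY, if_false, Int.ModEq] at this ⊢
    rw [hX w hwI]
    omega

lemma ParityAbove.sub_one_iff (h : ParityAbove Y A C w) :
    ParityAbove Y A C (w - 1) ↔ w ≡ A + 1 - C [ZMOD 2] ∨ (w - 1 ∈ Y ↔ w ∈ Y) := by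
  simp only [ParityAbove, card_filter_sub_one_lt, Int.ModEq] at h ⊢
  by_cases h₁ : w ∈ Y <;> by_cases h₂ : w - 1 ∈ Y <;>
    simp only [h₁, h₂, if_true, if_false, iff_self, iff_false, or_true, or_false, iff_true,
      not_true_eq_false, Nat.cast_add, Nat.cast_one, Nat.cast_zero] at h ⊢ <;> omega

end ParityAbove

lemma forall_mem_Ioc_modEq_or_iff {m k : ℤ} {Y : Finset ℤ} :
    (∀ w ∈ Ioc (m + 1) (m + 2 * k), w ≡ m [ZMOD 2] ∨ (w - 1 ∈ Y ↔ w ∈ Y)) ↔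
      ∀ i ∈ Icc 1 (k - 1), (m + 2 * i ∈ Y ↔ m + 2 * i + 1 ∈ Y) := by
  refine ⟨fun h i hi => ?_, fun h w hw => ?_⟩
  · have hi' := mem_Icc.1 hi
    rcases h (m + 2 * i + 1) (mem_Ioc.2 ⟨by omega, by omega⟩) with h | h
    · rw [Int.ModEq] at h
      omega
    · rwa [add_sub_cancel_right] at h
  · by_cases hwm : w ≡ m [ZMOD 2]
    · exact Or.inl hwm
    · have hw' := mem_Ioc.1 hw
      rw [Int.ModEq] at hwm
      obtain ⟨i, rfl⟩ : ∃ i, w = m + 2 * i + 1 := ⟨(w - m - 1) / 2, by omega⟩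
      refine Or.inr ?_
      rw [add_sub_cancel_right]
      exact h i (mem_Icc.2 ⟨by omega, by omega⟩)

theorem rankParity_and_rankParity_sdiff_iff_blocks {m A B k : ℤ} (hk : 1 ≤ k)
    (hAB : B ≡ A + 1 [ZMOD 2]) {Y : Finset ℤ} (hY : Y ⊆ Icc (m + 1) (m + 2 * k))
    (hodd : Odd #Y) :
    RankParity Y A ∧ RankParity (Icc (m + 1) (m + 2 * k) \ Y) B ↔
      (m + 2 * k ∈ Y ↔ A ≡ m [ZMOD 2]) ∧ (m + 1 ∈ Y ↔ ¬A ≡ m [ZMOD 2]) ∧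
        ∀ i ∈ Icc 1 (k - 1), (m + 2 * i ∈ Y ↔ m + 2 * i + 1 ∈ Y) := by
  rw [Int.ModEq] at hAB
  have hstep : ∀ w ∈ Ioc (m + 1) (m + 2 * k), ParityAbove Y A (m + 2 * k - B) w →
      (ParityAbove Y A (m + 2 * k - B) (w - 1) ↔ w ≡ m [ZMOD 2] ∨ (w - 1 ∈ Y ↔ w ∈ Y)) :=
    fun w _ h => by
      rw [h.sub_one_iff, show w ≡ A + 1 - (m + 2 * k - B) [ZMOD 2] ↔ w ≡ m [ZMOD 2] by
        simp only [Int.ModEq]; omega]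
  have htop : ParityAbove Y A (m + 2 * k - B) (m + 2 * k) ↔ (m + 2 * k ∈ Y ↔ A ≡ m [ZMOD 2]) := by
    have hempty : #{z ∈ Y | m + 2 * k < z} = 0 := card_eq_zero.2 <| filter_eq_empty_iff.2
      fun z hz => by have := mem_Icc.1 (hY hz); omega
    by_cases h : m + 2 * k ∈ Y <;>
      simp only [ParityAbove, hempty, h, if_true, if_false, true_iff, false_iff, Int.ModEq,
        Nat.cast_zero] <;> omega
  -- the bottom endpoint is fixed by the parity of `#Y = #{z ∈ Y | m < z}`
  have hbot : ParityAbove Y A (m + 2 * k - B) (m + 1) → (m + 1 ∈ Y ↔ ¬A ≡ m [ZMOD 2]) := by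
    have hcard := card_filter_sub_one_lt Y (m + 1)
    rw [add_sub_cancel_right, filter_true_of_mem fun z hz => by have := mem_Icc.1 (hY hz); omega]
      at hcard
    obtain ⟨j, hj⟩ := hodd
    by_cases h : m + 1 ∈ Y <;>
      simp only [ParityAbove, hj, h, if_true, if_false, true_iff, false_iff, not_not,
        Int.ModEq] at hcard ⊢ <;> omega
  rw [rankParity_and_rankParity_sdiff_iff hY, ← forall_mem_Ioc_modEq_or_iff]
  constructor
  · intro h
    obtain ⟨h₁, h₂⟩ := (forall_mem_Icc_iff_of_step (by omega) hstep).1 h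
    exact ⟨htop.1 h₁, hbot (h _ (left_mem_Icc.2 (by omega))), h₂⟩
  · rintro ⟨h₁, -, h₂⟩
    exact (forall_mem_Icc_iff_of_step (by omega) hstep).2 ⟨htop.2 h₁, h₂⟩

def pairUnion (m : ℤ) (T : Finset ℤ) : Finset ℤ :=
  T.image (fun i => m + 2 * i) ∪ T.image (fun i => m + 2 * i + 1)

lemma mem_pairUnion {m w : ℤ} {T : Finset ℤ} : w ∈ pairUnion m T ↔ (w - m) / 2 ∈ T := by
  simp only [pairUnion, mem_union, mem_image]
  constructor
  · rintro (⟨i, hi, rfl⟩ | ⟨i, hi, rfl⟩) <;> convert hi using 1 <;> omega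
  · intro h
    rcases Int.emod_two_eq_zero_or_one (w - m) with h2 | h2
    · exact Or.inl ⟨_, h, by omega⟩
    · exact Or.inr ⟨_, h, by omega⟩

lemma card_pairUnion (m : ℤ) (T : Finset ℤ) : #(pairUnion m T) = 2 * #T := by
  rw [pairUnion, card_union_of_disjoint, card_image_of_injective _ (fun i j h => by omega),
    card_image_of_injective _ (fun i j h => by omega), two_mul]
  exact disjoint_left.2 fun w h₁ h₂ => by
    obtain ⟨i, -, rfl⟩ := mem_image.1 h₁
    obtain ⟨j, -, h⟩ := mem_image.1 h₂
    omega

/-- `Y` is made of blocks `{m + 2i, m + 2i + 1}` with `1 ≤ i ≤ k - 1` and of the endpoint `e`,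
one of `m + 1` and `m + 2k`. -/
def IsBlockSet (m k e : ℤ) (Y : Finset ℤ) : Prop :=
  (m + 2 * k ∈ Y ↔ e = m + 2 * k) ∧ (m + 1 ∈ Y ↔ e = m + 1) ∧
    ∀ i ∈ Icc 1 (k - 1), (m + 2 * i ∈ Y ↔ m + 2 * i + 1 ∈ Y)

section IsBlockSet

variable {m k e : ℤ} {T Y : Finset ℤ}

lemma notMem_pairUnion (he : e = m + 1 ∨ e = m + 2 * k) (hT : T ⊆ Icc 1 (k - 1)) :
    e ∉ pairUnion m T := fun h => by
  have := mem_Icc.1 (hT (mem_pairUnion.1 h)); omega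

lemma insert_pairUnion_subset (hk : 1 ≤ k) (he : e = m + 1 ∨ e = m + 2 * k)
    (hT : T ⊆ Icc 1 (k - 1)) : insert e (pairUnion m T) ⊆ Icc (m + 1) (m + 2 * k) := by
  intro w hw
  rcases mem_insert.1 hw with rfl | h
  · exact mem_Icc.2 (by omega)
  · have := mem_Icc.1 (hT (mem_pairUnion.1 h)); exact mem_Icc.2 (by omega)

lemma isBlockSet_insert_pairUnion (he : e = m + 1 ∨ e = m + 2 * k) (hT : T ⊆ Icc 1 (k - 1)) :
    IsBlockSet m k e (insert e (pairUnion m T)) := by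
  have hbd : ∀ i ∈ T, 1 ≤ i ∧ i ≤ k - 1 := fun i hi => mem_Icc.1 (hT hi)
  refine ⟨?_, ?_, fun i hi => ?_⟩
  · rw [mem_insert, mem_pairUnion]
    refine ⟨fun h => h.elim Eq.symm fun h => ?_, fun h => Or.inl h.symm⟩
    have := hbd _ h; omega
  · rw [mem_insert, mem_pairUnion]
    refine ⟨fun h => h.elim Eq.symm fun h => ?_, fun h => Or.inl h.symm⟩
    have := hbd _ h; omega
  · have hi' := mem_Icc.1 hi
    rw [mem_insert, mem_insert, mem_pairUnion, mem_pairUnion,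
      show (m + 2 * i - m) / 2 = i by omega, show (m + 2 * i + 1 - m) / 2 = i by omega]
    constructor <;> rintro (h | h) <;> first | exact Or.inr h | omega

lemma IsBlockSet.insert_pairUnion_eq (hY : IsBlockSet m k e Y)
    (hYI : Y ⊆ Icc (m + 1) (m + 2 * k)) (he : e = m + 1 ∨ e = m + 2 * k) :
    insert e (pairUnion m {i ∈ Icc 1 (k - 1) | m + 2 * i ∈ Y}) = Y := by
  obtain ⟨htop, hbot, hpair⟩ := hY
  ext w
  simp only [mem_insert, mem_pairUnion, mem_filter, mem_Icc]
  constructor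
  · rintro (rfl | ⟨hi, h⟩)
    · rcases he with rfl | rfl
      · exact hbot.2 rfl
      · exact htop.2 rfl
    · rcases Int.emod_two_eq_zero_or_one (w - m) with h2 | h2
      · convert h using 1; omega
      · convert (hpair _ (mem_Icc.2 hi)).1 h using 1; omega
  · intro hw
    have := mem_Icc.1 (hYI hw)
    by_cases hw₁ : w = m + 1
    · exact Or.inl (hw₁ ▸ (hbot.1 (hw₁ ▸ hw)).symm)
    by_cases hw₂ : w = m + 2 * k
    · exact Or.inl (hw₂ ▸ (htop.1 (hw₂ ▸ hw)).symm)
    refine Or.inr ⟨⟨by omega, by omega⟩, ?_⟩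
    rcases Int.emod_two_eq_zero_or_one (w - m) with h2 | h2
    · convert hw using 1; omega
    · exact (hpair _ (mem_Icc.2 ⟨by omega, by omega⟩)).2 (by convert hw using 1; omega)

end IsBlockSet

open scoped Classical in
theorem card_filter_isBlockSet {m e : ℤ} {k : ℕ} (hk : 1 ≤ k) (he : e = m + 1 ∨ e = m + 2 * k)
    (r : ℕ) :
    #{Y ∈ (Icc (m + 1) (m + 2 * k)).powerset | #Y = 2 * r + 1 ∧ IsBlockSet m k e Y} =
      (k - 1).choose r := by
  have hJ : #(powersetCard r (Icc (1 : ℤ) (k - 1))) = (k - 1).choose r := by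
    rw [card_powersetCard, Int.card_Icc]
    congr
    omega
  rw [← hJ]
  symm
  refine card_nbij' (fun T => insert e (pairUnion m T))
    (fun Y => {i ∈ Icc 1 (k - 1) | m + 2 * i ∈ Y})
    (fun T hT => ?_) (fun Y hY => ?_) (fun T hT => ?_) (fun Y hY => ?_)
  · obtain ⟨hTJ, hTr⟩ := mem_powersetCard.1 hT
    refine mem_filter.2 ⟨mem_powerset.2 (insert_pairUnion_subset (by omega) he hTJ), ?_,
      isBlockSet_insert_pairUnion he hTJ⟩
    rw [card_insert_of_notMem (notMem_pairUnion he hTJ), card_pairUnion, hTr]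
  · obtain ⟨hYI, hYr, hY⟩ := mem_filter.1 hY
    refine mem_powersetCard.2 ⟨filter_subset _ _, ?_⟩
    have := congrArg card (IsBlockSet.insert_pairUnion_eq hY (mem_powerset.1 hYI) he)
    rw [hYr, card_insert_of_notMem (notMem_pairUnion he (filter_subset _ _)),
      card_pairUnion] at this
    change #{i ∈ Icc 1 ((k : ℤ) - 1) | m + 2 * i ∈ Y} = r
    omega
  · ext i
    have hTJ := (mem_powersetCard.1 hT).1
    simp only [mem_filter, mem_insert, mem_pairUnion, show (m + 2 * i - m) / 2 = i by omega]
    refine ⟨fun ⟨hi, h⟩ => h.resolve_left fun h' => ?_, fun h => ⟨hTJ h, Or.inr h⟩⟩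
    have := mem_Icc.1 hi; omega
  · obtain ⟨hYI, -, hY⟩ := mem_filter.1 hY
    exact IsBlockSet.insert_pairUnion_eq hY (mem_powerset.1 hYI) he

theorem card_blockSets_eq_choose (m : ℤ) {k : ℕ} (hk : 1 ≤ k) (r : ℕ) (P : Prop) [Decidable P] :
    #{Y ∈ (Icc (m + 1) (m + 2 * k)).powerset | #Y = 2 * r + 1 ∧ (m + 2 * k ∈ Y ↔ P) ∧
      (m + 1 ∈ Y ↔ ¬P) ∧ ∀ i ∈ Icc 1 ((k : ℤ) - 1), (m + 2 * i ∈ Y ↔ m + 2 * i + 1 ∈ Y)} =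
      (k - 1).choose r := by
  classical
  set e : ℤ := if P then m + 2 * k else m + 1
  have he : e = m + 1 ∨ e = m + 2 * k := by by_cases hP : P <;> simp [e, hP]
  have hPe : P ↔ e = m + 2 * k := by by_cases hP : P <;> simp [e, hP]; omega
  have hnPe : ¬P ↔ e = m + 1 := by by_cases hP : P <;> simp [e, hP]; omega
  rw [← card_filter_isBlockSet hk he r]
  exact congrArg card (filter_congr fun Y _ => by rw [IsBlockSet, hnPe, hPe])

/-- Case 2 I of the main theorem for Sp(2n,ℝ): `p, q` odd, `ε+η ≡ n (mod 2)`;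
the number of reduced solutions is `C(k−1, (p−1)/2) = C(k−1, (q−1)/2)`. -/
theorem stmt11 (n k u v p q ε η : ℕ) (hk : 1 ≤ k) (hn : 2 * k + u + v = n)
    (hpq : p + q = 2 * k) (hε : ε ≤ 1) (hη : η ≤ 1)
    (hpo : p % 2 = 1) (hqo : q % 2 = 1)
    (hmod : (ε + η) % 2 = n % 2) :
    Nat.card (RedSol n u v p q ε η) = Nat.choose (k - 1) ((p - 1) / 2) ∧
    Nat.choose (k - 1) ((p - 1) / 2) = Nat.choose (k - 1) ((q - 1) / 2) := by
  obtain ⟨r, rfl⟩ : ∃ r, p = 2 * r + 1 := ⟨p / 2, by omega⟩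
  obtain ⟨s, rfl⟩ : ∃ s, q = 2 * s + 1 := ⟨q / 2, by omega⟩
  rw [show (2 * r + 1 - 1) / 2 = r by omega, show (2 * s + 1 - 1) / 2 = s by omega]
  refine ⟨?_, Nat.choose_symm_of_eq_add (by omega)⟩
  have hI : Icc ((u : ℤ) + v + 1) n = Icc ((u + v : ℤ) + 1) ((u + v : ℤ) + 2 * k) := by
    rw [← hn]; push_cast; ring_nf
  rw [card_redSol_eq_card_filter (by omega) hε hη, hI,
    ← card_blockSets_eq_choose (u + v) hk r (v + (2 * r + 1 : ℕ) - 1 + ε ≡ u + v [ZMOD 2])]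
  refine congrArg card (filter_congr fun Y hY => and_congr_right fun hYp =>
    rankParity_and_rankParity_sdiff_iff_blocks (by omega) ?_ (mem_powerset.1 hY)
      (hYp ▸ odd_two_mul_add_one r))
  -- this is where `ε + η ≡ n` enters
  rw [Int.ModEq]
  omega
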